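/- Let G be a prodiscrete topological group that has a fundamental system 𝓝 = {N_i}_{i∈I} of neighborhoods of the identity consisting of open normal subgroups. Then there is an isomorphism of groups G^∧ = Aut(F_G) ≅ lim_{N∈𝓝} G/N (the inverse limit of the quotient groups G/N over the directed system 𝓝 ordered by reverse inclusion), under which the canonical homomorphism ι_G : G → G^∧ corresponds to the natural map G → lim_{N∈𝓝} G/N. In other words, in this case the prodiscrete completion coincides with the classical completion. -/

import Mathlib

open CategoryTheory

universe u v

namespace ProdiscreteCompletion

variable (G : Type u) [Group G] [TopologicalSpace G]

/-- The category `G-Set` of continuous discrete `G`-sets: `G`-sets in which the stabilizer of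
every point is an open subgroup of `G` (equivalently, the action map is continuous for the
discrete topology on the set). -/
abbrev ContGSet :=
  ObjectProperty.FullSubcategory (fun X : Action (Type u) G =>
    ∀ x : X.V, IsOpen {g : G | X.ρ g x = x})

/-- The forgetful functor `F_G : G-Set ⥤ Set` on continuous discrete `G`-sets. -/
abbrev forgetContGSet : ContGSet G ⥤ Type u :=
  ObjectProperty.ι _ ⋙ Action.forget _ _

variable {G}

/-- For `g : G`, the natural automorphism of the forgetful functor whose component at each
continuous discrete `G`-set `X` is the action of `g` on `X`. -/
def iotaIso (g : G) : forgetContGSet G ≅ forgetContGSet G :=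
  NatIso.ofComponents
    (fun X => Equiv.toIso
      { toFun := X.obj.ρ g
        invFun := X.obj.ρ g⁻¹
        left_inv := fun x => by
          have h : X.obj.ρ (g⁻¹ * g) x = X.obj.ρ g⁻¹ (X.obj.ρ g x) :=
            ConcreteCategory.congr_hom (X.obj.ρ.map_mul g⁻¹ g) x
          rw [inv_mul_cancel] at h
          rw [Action.ρ_one] at h
          exact h.symm
        right_inv := fun x => by
          have h : X.obj.ρ (g * g⁻¹) x = X.obj.ρ g (X.obj.ρ g⁻¹ x) :=
            ConcreteCategory.congr_hom (X.obj.ρ.map_mul g g⁻¹) x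
          rw [mul_inv_cancel] at h
          rw [Action.ρ_one] at h
          exact h.symm })
    (fun {X Y} f => by ext x; exact (ConcreteCategory.congr_hom (f.hom.comm g) x).symm)

variable (G)

/-- The canonical group homomorphism `ι_G : G → G^∧ = Aut (F_G)` sending `g ∈ G` to the
natural automorphism of the forgetful functor acting by `g` on each continuous discrete
`G`-set. -/
def iota : G →* Aut (forgetContGSet G) where
  toFun := iotaIso
  map_one' := by
    ext X x
    show (iotaIso 1).hom.app X x = _
    simp [iotaIso]
    rfl
  map_mul' g₁ g₂ := by
    ext X x
    have h : X.obj.ρ (g₁ * g₂) x = X.obj.ρ g₁ (X.obj.ρ g₂ x) :=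
      ConcreteCategory.congr_hom (X.obj.ρ.map_mul g₁ g₂) x
    exact h

variable {G}

/-- The stabilizer subgroup `U_{X,x} ⊆ Aut (F_G)` of a point `x` of a continuous discrete
`G`-set `X`. -/
def USub (X : ContGSet G) (x : X.obj.V) : Subgroup (Aut (forgetContGSet G)) where
  carrier := {γ | γ.hom.app X x = x}
  one_mem' := rfl
  mul_mem' := by
    intro γ δ hγ hδ
    show (γ * δ).hom.app X x = x
    rw [Aut.Aut_mul_def]
    show γ.hom.app X (δ.hom.app X x) = x
    rw [show δ.hom.app X x = x from hδ]
    exact hγ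
  inv_mem' := by
    intro γ hγ
    show γ⁻¹.hom.app X x = x
    conv_lhs => rw [← show γ.hom.app X x = x from hγ]
    rw [Aut.Aut_inv_def]
    exact ConcreteCategory.congr_hom (congrArg (fun τ : forgetContGSet G ⟶ forgetContGSet G => τ.app X)
      γ.hom_inv_id) x


variable {G : Type u} [Group G]

/-- The inverse limit `lim_i G/N i` of the quotients of `G` by a family of normal subgroups,
realized as the subgroup of the product `∀ i, G ⧸ N i` consisting of the families compatible
with the natural projections `G ⧸ N i → G ⧸ N j` for `N i ≤ N j`. -/
def inverseLimit {ι : Type v} (N : ι → Subgroup G) [∀ i, (N i).Normal] :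
    Subgroup (∀ i, G ⧸ N i) where
  carrier := {f | ∀ (i j : ι) (h : N i ≤ N j),
    QuotientGroup.map (N i) (N j) (MonoidHom.id G)
      (fun g hg => by simpa using h hg) (f i) = f j}
  one_mem' := fun i j h => by simp
  mul_mem' := by
    intro f g hf hg i j h
    simp only [Pi.mul_apply, map_mul]
    rw [hf i j h, hg i j h]
  inv_mem' := by
    intro f hf i j h
    simp only [Pi.inv_apply, map_inv]
    rw [hf i j h]

/-! A continuous discrete `G`-set is a union of orbits `G ⧸ Stab(x)`, and every stabilizer is
open, hence contains some `N i`. So `x` is the image of the identity coset under an equivariant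
map `G ⧸ N i → X`, and a natural automorphism `γ` of the forgetful functor is determined by the
points `γ (1 · N i) ∈ G ⧸ N i`; naturality along the projections `G ⧸ N i → G ⧸ N j` makes them a
compatible family. Conversely a compatible family `f` acts on `x` through `f i` for any `i` with
`N i ≤ Stab(x)`: this does not depend on `i` because the `N i` are directed, and it is
multiplicative because the `N i` are normal, so that `N i ≤ Stab(g • x)` as well. -/

open MulAction

instance (G : Type u) [Monoid G] (X : Action (Type u) G) : MulAction G X.V :=
  Action.instMulAction X

section Group

variable {G : Type u} [Group G]

theorem Action.hom_smul {X Y : Action (Type u) G} (φ : X ⟶ Y) (g : G) (x : X.V) :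
    φ.hom (g • x) = g • φ.hom x :=
  ConcreteCategory.congr_hom (φ.comm g) x

theorem stabilizer_quotient_mk (H : Subgroup G) [H.Normal] (a : G) :
    stabilizer G (a : G ⧸ H) = H := by
  rw [← mul_one a, ← smul_eq_mul, ← MulAction.Quotient.smul_mk,
    stabilizer_smul_eq_stabilizer_map_conj, stabilizer_quotient, MulEquiv.toMonoidHom_eq_coe]
  exact Subgroup.Normal.map_conj_eq H a

theorem le_stabilizer_smul {α : Type*} [MulAction G α] {H : Subgroup G} [H.Normal] {x : α}
    (hx : H ≤ stabilizer G x) (g : G) : H ≤ stabilizer G (g • x) := by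
  rw [stabilizer_smul_eq_stabilizer_map_conj, MulEquiv.toMonoidHom_eq_coe,
    ← Subgroup.Normal.map_conj_eq H g]
  exact Subgroup.map_mono hx

theorem smul_eq_smul_of_mk_eq {α : Type*} [MulAction G α] {H : Subgroup G} {x : α}
    (hx : H ≤ stabilizer G x) {a b : G} (h : (a : G ⧸ H) = b) : a • x = b • x := by
  rw [← ofQuotientStabilizer_mk, ← ofQuotientStabilizer_mk,
    ← Subgroup.quotientMapOfLE_apply_mk hx, ← Subgroup.quotientMapOfLE_apply_mk hx, h]

theorem inverseLimit.mk_eq_of_le {ι : Type v} {N : ι → Subgroup G} [∀ i, (N i).Normal]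
    (f : inverseLimit N) {i j : ι} (h : N i ≤ N j) {a : G} (ha : (a : G ⧸ N i) = f.1 i) :
    (a : G ⧸ N j) = f.1 j := by
  rw [← f.2 i j h, ← ha, QuotientGroup.map_mk, MonoidHom.id_apply]

theorem le_stabilizer_quotient_one (H : Subgroup G) : H ≤ stabilizer G ((1 : G) : G ⧸ H) :=
  (stabilizer_quotient H).ge

end Group

variable {G : Type u} [Group G] [TopologicalSpace G]

theorem isOpen_stabilizer (X : ContGSet G) (x : X.obj.V) : IsOpen (stabilizer G x : Set G) :=
  X.property x

def quotientContGSet (H : Subgroup G) [H.Normal] (hH : IsOpen (H : Set G)) : ContGSet G :=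
  ⟨Action.ofMulAction G (G ⧸ H), fun q => by
    induction q using QuotientGroup.induction_on with
    | H a =>
      show IsOpen (stabilizer G (a : G ⧸ H) : Set G)
      rwa [stabilizer_quotient_mk]⟩

section Orbit

variable {H : Subgroup G} [H.Normal] (hH : IsOpen (H : Set G))

def orbitHom (X : ContGSet G) {x : X.obj.V} (hx : H ≤ stabilizer G x) :
    quotientContGSet H hH ⟶ X :=
  ObjectProperty.homMk
    { hom := TypeCat.ofHom (ofQuotientStabilizer G x ∘ Subgroup.quotientMapOfLE hx)
      comm := fun g => by
        ext q
        induction q using QuotientGroup.induction_on with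
        | H a => exact mul_smul g a x }

theorem orbitHom_mk (X : ContGSet G) {x : X.obj.V} (hx : H ≤ stabilizer G x) (a : G) :
    (orbitHom hH X hx).hom.hom (a : G ⧸ H) = a • x :=
  rfl

theorem app_eq_orbitHom_app_one (τ : forgetContGSet G ⟶ forgetContGSet G) (X : ContGSet G)
    {x : X.obj.V} (hx : H ≤ stabilizer G x) :
    τ.app X x = (orbitHom hH X hx).hom.hom (τ.app (quotientContGSet H hH) (1 : G ⧸ H)) := by
  conv_lhs => rw [← one_smul G x]
  exact NatTrans.naturality_apply τ (orbitHom hH X hx) (1 : G ⧸ H)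

theorem orbitHom_quotient_apply {K : Subgroup G} [K.Normal] (hK : IsOpen (K : Set G))
    (hHK : H ≤ K) (q : G ⧸ H) :
    (orbitHom hH (quotientContGSet K hK) (x := ((1 : G) : G ⧸ K))
        (hHK.trans (le_stabilizer_quotient_one K))).hom.hom q =
      QuotientGroup.map H K (MonoidHom.id G) hHK q := by
  induction q using QuotientGroup.induction_on with
  | H a => exact congrArg _ (mul_one a)

end Orbit

variable {ι : Type v} {N : ι → Subgroup G} [∀ i, (N i).Normal]

def evalCosets (hopen : ∀ i, IsOpen (N i : Set G)) (γ : Aut (forgetContGSet G)) :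
    inverseLimit N :=
  ⟨fun i => γ.hom.app (quotientContGSet (N i) (hopen i)) (1 : G ⧸ N i), fun i j h =>
    (orbitHom_quotient_apply (hopen i) (hopen j) h _).symm.trans
      (app_eq_orbitHom_app_one (hopen i) γ.hom _ _).symm⟩

section Basis

variable (hbasis : (nhds (1 : G)).HasBasis (fun _ : ι => True) (fun i => (N i : Set G)))
include hbasis

omit [∀ i, (N i).Normal] in
theorem exists_le_of_mem_nhds {H : Subgroup G} (hH : (H : Set G) ∈ nhds 1) : ∃ i, N i ≤ H := by
  obtain ⟨i, -, hi⟩ := hbasis.mem_iff.1 hH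
  exact ⟨i, hi⟩

omit [∀ i, (N i).Normal] in
theorem exists_le_inf (i j : ι) : ∃ k, N k ≤ N i ⊓ N j :=
  exists_le_of_mem_nhds hbasis
    (Filter.inter_mem (hbasis.mem_of_mem trivial) (hbasis.mem_of_mem trivial))

omit [∀ i, (N i).Normal] in
theorem exists_le_stabilizer (X : ContGSet G) (x : X.obj.V) : ∃ i, N i ≤ stabilizer G x :=
  exists_le_of_mem_nhds hbasis ((isOpen_stabilizer X x).mem_nhds (one_mem _))

noncomputable def limitSmul (f : inverseLimit N) {X : ContGSet G} (x : X.obj.V) : X.obj.V :=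
  (f.1 (exists_le_stabilizer hbasis X x).choose).out • x

theorem limitSmul_eq (f : inverseLimit N) {X : ContGSet G} {x : X.obj.V} {i : ι}
    (hi : N i ≤ stabilizer G x) {a : G} (ha : (a : G ⧸ N i) = f.1 i) :
    limitSmul hbasis f x = a • x := by
  obtain ⟨k, hk⟩ := exists_le_inf hbasis (exists_le_stabilizer hbasis X x).choose i
  have hc : ((f.1 k).out : G ⧸ N k) = f.1 k := QuotientGroup.out_eq' _
  calc limitSmul hbasis f x = (f.1 k).out • x :=
        smul_eq_smul_of_mk_eq (exists_le_stabilizer hbasis X x).choose_spec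
          ((QuotientGroup.out_eq' _).trans
            (inverseLimit.mk_eq_of_le f (hk.trans inf_le_left) hc).symm)
    _ = a • x :=
        smul_eq_smul_of_mk_eq hi
          ((inverseLimit.mk_eq_of_le f (hk.trans inf_le_right) hc).trans ha.symm)

theorem limitSmul_one {X : ContGSet G} (x : X.obj.V) : limitSmul hbasis 1 x = x := by
  obtain ⟨i, hi⟩ := exists_le_stabilizer hbasis X x
  rw [limitSmul_eq hbasis 1 hi (a := 1) rfl, one_smul]

theorem limitSmul_mul (f f' : inverseLimit N) {X : ContGSet G} (x : X.obj.V) :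
    limitSmul hbasis (f * f') x = limitSmul hbasis f (limitSmul hbasis f' x) := by
  obtain ⟨i, hi⟩ := exists_le_stabilizer hbasis X x
  have ha : ((f.1 i).out : G ⧸ N i) = f.1 i := QuotientGroup.out_eq' _
  have hb : ((f'.1 i).out : G ⧸ N i) = f'.1 i := QuotientGroup.out_eq' _
  rw [limitSmul_eq hbasis f' hi hb, limitSmul_eq hbasis f (le_stabilizer_smul hi _) ha,
    limitSmul_eq hbasis (f * f') hi (a := (f.1 i).out * (f'.1 i).out)
      (by rw [QuotientGroup.mk_mul, ha, hb]; rfl), mul_smul]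

theorem hom_limitSmul (f : inverseLimit N) {X Y : ContGSet G} (φ : X ⟶ Y) (x : X.obj.V) :
    φ.hom.hom (limitSmul hbasis f x) = limitSmul hbasis f (φ.hom.hom x) := by
  obtain ⟨i, hi⟩ := exists_le_stabilizer hbasis X x
  have ha : ((f.1 i).out : G ⧸ N i) = f.1 i := QuotientGroup.out_eq' _
  have hφ : N i ≤ stabilizer G (φ.hom.hom x) := fun n hn => by
    rw [mem_stabilizer_iff, ← Action.hom_smul, hi hn]
  rw [limitSmul_eq hbasis f hi ha, limitSmul_eq hbasis f hφ ha, Action.hom_smul]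

noncomputable def toAut : inverseLimit N →* Aut (forgetContGSet G) where
  toFun f := NatIso.ofComponents
    (fun X => Equiv.toIso
      { toFun := limitSmul hbasis f
        invFun := limitSmul hbasis f⁻¹
        left_inv := fun (x : X.obj.V) => by rw [← limitSmul_mul, inv_mul_cancel, limitSmul_one]
        right_inv := fun (x : X.obj.V) => by rw [← limitSmul_mul, mul_inv_cancel, limitSmul_one] })
    (fun φ => by ext x; exact (hom_limitSmul hbasis f φ x).symm)
  map_one' := by ext X x; exact limitSmul_one hbasis x
  map_mul' f f' := by ext X x; exact limitSmul_mul hbasis f f' x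

variable (hopen : ∀ i, IsOpen (N i : Set G))

theorem evalCosets_toAut (f : inverseLimit N) : evalCosets hopen (toAut hbasis f) = f := by
  ext i
  have hc : ((f.1 i).out : G ⧸ N i) = f.1 i := QuotientGroup.out_eq' _
  exact (limitSmul_eq hbasis f (X := quotientContGSet (N i) (hopen i))
    (le_stabilizer_quotient_one (N i)) hc).trans ((congrArg _ (mul_one _)).trans hc)

theorem toAut_evalCosets (γ : Aut (forgetContGSet G)) :
    toAut hbasis (evalCosets hopen γ) = γ := by
  ext X (x : X.obj.V)
  obtain ⟨i, hi⟩ := exists_le_stabilizer hbasis X x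
  have hc : (((evalCosets hopen γ).1 i).out : G ⧸ N i) = (evalCosets hopen γ).1 i :=
    QuotientGroup.out_eq' _
  exact (limitSmul_eq hbasis _ hi hc).trans
    ((congrArg (orbitHom (hopen i) X hi).hom.hom hc).trans
      (app_eq_orbitHom_app_one (hopen i) γ.hom X hi).symm)

noncomputable def inverseLimitEquivAut : inverseLimit N ≃* Aut (forgetContGSet G) where
  toFun := toAut hbasis
  invFun := evalCosets hopen
  left_inv := evalCosets_toAut hbasis hopen
  right_inv := toAut_evalCosets hbasis hopen
  map_mul' := (toAut hbasis).map_mul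

theorem inverseLimitEquivAut_symm_iota (g : G) (i : ι) :
    ((inverseLimitEquivAut hbasis hopen).symm (iota G g)).1 i = g :=
  congrArg _ (mul_one g)

end Basis

theorem completion_eq_inverse_limit_general
    (G : Type u) [Group G] [TopologicalSpace G]
    {ι : Type u} (N : ι → Subgroup G) [∀ i, (N i).Normal]
    (hopen : ∀ i, IsOpen (N i : Set G))
    (hbasis : (nhds (1 : G)).HasBasis (fun _ : ι => True) (fun i => (N i : Set G))) :
    ∃ e : Aut (forgetContGSet G) ≃* inverseLimit N,
      ∀ (g : G) (i : ι), ((e (iota G g) : ∀ i, G ⧸ N i) i) = QuotientGroup.mk g :=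
  ⟨(inverseLimitEquivAut hbasis hopen).symm, inverseLimitEquivAut_symm_iota hbasis hopen⟩

/-- Proposition `P:classicalcompletion` of the paper.  Let `G` be a
prodiscrete group admitting a fundamental system of neighborhoods of the identity consisting of
open normal subgroups `N i`.  Then the prodiscrete completion `G^∧ = Aut (F_G)` is isomorphic,
as a group, to the inverse limit of the quotients `G / N i`, and under this isomorphism the
canonical map `ι_G` corresponds to the natural map `G → lim_i G/N i`. -/
theorem completion_eq_inverse_limit
    (G : Type u) [Group G] [TopologicalSpace G] [IsTopologicalGroup G]
    {ι : Type u} (N : ι → Subgroup G) [∀ i, (N i).Normal]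
    (hopen : ∀ i, IsOpen (N i : Set G))
    (hbasis : (nhds (1 : G)).HasBasis (fun _ : ι => True) (fun i => (N i : Set G))) :
    ∃ e : Aut (forgetContGSet G) ≃* inverseLimit N,
      ∀ (g : G) (i : ι), ((e (iota G g) : ∀ i, G ⧸ N i) i) = QuotientGroup.mk g :=
  completion_eq_inverse_limit_general G N hopen hbasis

end ProdiscreteCompletion
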